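/- arXiv:2507.01046 — 9 statements merged into one kernel-verified Lean document; each statement's English description precedes it below -/
import Mathlib

section
/- Let (S,I,R,S*,I*,R*) : [0,T] → ℝ⁶ be a differentiable solution of the deterministic SIR model with noncompliance whose initial values S(0), I(0), R(0), S*(0), I*(0), R*(0) are all nonnegative. Then S(t), I(t), R(t), S*(t), I*(t), R*(t) are nonnegative for all t ∈ [0,T]. -/
/-!
A vector field `F` on `ℝⁿ` is quasi-positive when `Fᵢ(y) ≥ 0` on the face `{y ≥ 0, yᵢ = 0}`
of the nonnegative orthant. If `F` is moreover Lipschitz with constant `L` on a ball, then at a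
point `y` of that ball whose smallest coordinate `yᵢ` is negative, comparing `y` with its
positive part `y ⊔ 0` (which lies on the face) gives `Fᵢ(y) ≥ L yᵢ`. Consequently the smallest
coordinate of a trajectory can never cross the barrier `-ε e^{(L+1)t}`, and letting
`ε → 0` shows that the trajectory stays in the orthant. The SIR field with noncompliance is
polynomial, and it is quasi-positive because every negative term in the equation of a
compartment is proportional to that compartment.
-/

open Set Filter Topology Metric

/-- The deterministic SIR model with noncompliance: `IsSIRSol` says that the six
population functions satisfy the ODE system at time `t`.
Variables: `S`, `I`, `R` compliant susceptible/infectious/recovered;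
`Ss = S*`, `Is = I*`, `Rs = R*` their noncompliant counterparts. -/
def IsSIRSol (b δ β γ α μ ν ξ : ℝ) (S I R Ss Is Rs : ℝ → ℝ) (t : ℝ) : Prop :=
  HasDerivAt S ((1 - ξ) * b - β * (1 - α) * S t * ((1 - α) * I t + Is t)
      - μ * S t * (Ss t + Is t + Rs t) + ν * Ss t - δ * S t) t ∧
  HasDerivAt I (β * (1 - α) * S t * ((1 - α) * I t + Is t) - γ * I t
      - μ * I t * (Ss t + Is t + Rs t) + ν * Is t - δ * I t) t ∧
  HasDerivAt R (γ * I t - μ * R t * (Ss t + Is t + Rs t) + ν * Rs t - δ * R t) t ∧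
  HasDerivAt Ss (ξ * b - β * Ss t * ((1 - α) * I t + Is t)
      + μ * S t * (Ss t + Is t + Rs t) - ν * Ss t - δ * Ss t) t ∧
  HasDerivAt Is (β * Ss t * ((1 - α) * I t + Is t) - γ * Is t
      + μ * I t * (Ss t + Is t + Rs t) - ν * Is t - δ * Is t) t ∧
  HasDerivAt Rs (γ * Is t + μ * R t * (Ss t + Is t + Rs t) - ν * Rs t - δ * Rs t) t

theorem HasDerivWithinAt.eventually_lt_of_pos {f : ℝ → ℝ} {f' x : ℝ}
    (hf : HasDerivWithinAt f f' (Ici x) x) (hf' : 0 < f') : ∀ᶠ z in 𝓝[>] x, f x < f z := by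
  have hslope := (hasDerivWithinAt_iff_tendsto_slope' (lt_irrefl x)).1 hf.Ioi_of_Ici
  filter_upwards [hslope.eventually (eventually_gt_nhds hf'), self_mem_nhdsWithin]
    with z hz hxz using (slope_pos_iff hxz).1 hz

section Barrier

variable {ι : Type*} [Finite ι] {x x' : ℝ → ι → ℝ} {a b K : ℝ}

theorem neg_mul_exp_le_of_mul_le_deriv_at_negative_min (hx : ContinuousOn x (Icc a b))
    (hx' : ∀ t ∈ Ico a b, HasDerivWithinAt x (x' t) (Ici t) t)
    (hK : ∀ t ∈ Ico a b, ∀ i, x t i < 0 → (∀ j, x t i ≤ x t j) → K * x t i ≤ x' t i)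
    (ha : 0 ≤ x a) {ε : ℝ} (hε : 0 < ε) :
    ∀ t ∈ Icc a b, ∀ i, -(ε * Real.exp ((K + 1) * t)) ≤ x t i := by
  set g : ℝ → ℝ := fun t => ε * Real.exp ((K + 1) * t)
  have hg_pos : ∀ t, 0 < g t := fun t => by positivity
  have hg' : ∀ t, HasDerivAt g ((K + 1) * g t) t := fun t => by
    simpa [g, mul_comm, mul_left_comm] using
      ((hasDerivAt_id t).const_mul (K + 1)).exp.const_mul ε
  set s : Set ℝ := {t | (fun _ => -g t) ≤ x t}
  have hs : IsClosed (s ∩ Icc a b) := by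
    rw [inter_comm]
    exact isClosed_Icc.isClosed_le (by fun_prop) hx
  suffices Icc a b ⊆ s from fun t ht => this ht
  refine hs.Icc_subset_of_forall_mem_nhdsWithin (fun i => ?_) fun t ⟨hts, ht⟩ => ?_
  · exact (neg_neg_of_pos (hg_pos a)).le.trans (ha i)
  suffices ∀ i, ∀ᶠ z in 𝓝[>] t, -g z ≤ x z i from (eventually_all.2 this).mono fun z hz => hz
  intro i
  have hxi : HasDerivWithinAt (fun z => x z i + g z) (x' t i + (K + 1) * g t) (Ici t) t :=
    (hasDerivWithinAt_pi.1 (hx' t ht) i).add (hg' t).hasDerivWithinAt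
  rcases (hts i).lt_or_eq with hlt | heq
  · have := hxi.continuousWithinAt.mono Ioi_subset_Ici_self
    filter_upwards [this.eventually (eventually_gt_nhds (by linarith : 0 < x t i + g t))]
      with z hz using by linarith
  -- At a contact point `x t i` is a negative minimal coordinate, so `hK` makes the
  -- derivative of `x · i + g` at least `-K g + (K + 1) g = g > 0`.
  · have heq : -g t = x t i := heq
    have hmin : ∀ j, x t i ≤ x t j := fun j => heq ▸ hts j
    have hderiv := hK t ht i (by linarith [hg_pos t]) hmin
    rw [← heq] at hderiv
    filter_upwards [hxi.eventually_lt_of_pos (by linarith [hg_pos t])]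
      with z hz using by linarith

theorem nonneg_of_mul_le_deriv_at_negative_min (hx : ContinuousOn x (Icc a b))
    (hx' : ∀ t ∈ Ico a b, HasDerivWithinAt x (x' t) (Ici t) t)
    (hK : ∀ t ∈ Ico a b, ∀ i, x t i < 0 → (∀ j, x t i ≤ x t j) → K * x t i ≤ x' t i)
    (ha : 0 ≤ x a) : ∀ t ∈ Icc a b, 0 ≤ x t := by
  intro t ht i
  show (0 : ℝ) ≤ x t i
  refine le_of_forall_pos_le_add fun ε hε => ?_
  have hexp := Real.exp_pos ((K + 1) * t)
  have := neg_mul_exp_le_of_mul_le_deriv_at_negative_min hx hx' hK ha (div_pos hε hexp) t ht i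
  rw [div_mul_cancel₀ _ hexp.ne'] at this
  linarith

end Barrier

def QuasiPositive {ι : Type*} (F : (ι → ℝ) → ι → ℝ) : Prop :=
  ∀ y : ι → ℝ, 0 ≤ y → ∀ i, y i = 0 → 0 ≤ F y i

section QuasiPositive

variable {ι : Type*} [Fintype ι] {F : (ι → ℝ) → ι → ℝ}

theorem QuasiPositive.mul_le_apply (hF : QuasiPositive F) {L : NNReal} {r : ℝ}
    (hL : LipschitzOnWith L F (closedBall 0 r)) {y : ι → ℝ} (hy : ‖y‖ ≤ r) {i : ι}
    (hyi : y i ≤ 0) (hmin : ∀ j, y i ≤ y j) : L * y i ≤ F y i := by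
  set y' := y ⊔ 0
  have hy' : ‖y'‖ ≤ r := by
    refine (pi_norm_le_iff_of_nonneg ((norm_nonneg y).trans hy)).2 fun j => ?_
    refine le_trans ?_ ((norm_le_pi_norm y j).trans hy)
    rcases le_total (y j) 0 with h | h <;> simp [y', h]
  have hdist : ‖y - y'‖ ≤ -y i := by
    refine (pi_norm_le_iff_of_nonneg (neg_nonneg.2 hyi)).2 fun j => ?_
    rcases le_total (y j) 0 with h | h
    · simpa [y', h, abs_of_nonpos] using hmin j
    · simpa [y', h] using hyi
  have hFy' : 0 ≤ F y' i := hF y' le_sup_right i (by simp [y', hyi])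
  have hlip : ‖F y - F y'‖ ≤ L * ‖y - y'‖ :=
    hL.norm_sub_le (mem_closedBall_zero_iff.2 hy) (mem_closedBall_zero_iff.2 hy')
  have hcomp : |F y i - F y' i| ≤ ‖F y - F y'‖ := norm_le_pi_norm (F y - F y') i
  have hLdist : L * ‖y - y'‖ ≤ L * -y i := mul_le_mul_of_nonneg_left hdist L.2
  linarith [neg_abs_le (F y i - F y' i)]

theorem QuasiPositive.nonneg_of_hasDerivWithinAt (hF : QuasiPositive F)
    (hF_lip : LocallyLipschitz F) {x : ℝ → ι → ℝ} {a b : ℝ} (hx : ContinuousOn x (Icc a b))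
    (hx' : ∀ t ∈ Ico a b, HasDerivWithinAt x (F (x t)) (Ici t) t) (ha : 0 ≤ x a) :
    ∀ t ∈ Icc a b, 0 ≤ x t := by
  obtain ⟨r, hr⟩ := isCompact_Icc.exists_bound_of_continuousOn hx
  obtain ⟨L, hL⟩ := hF_lip.locallyLipschitzOn.exists_lipschitzOnWith_of_compact
    (isCompact_closedBall (0 : ι → ℝ) r)
  exact nonneg_of_mul_le_deriv_at_negative_min hx hx'
    (fun t ht i hneg hmin => hF.mul_le_apply hL (hr t (Ico_subset_Icc_self ht)) hneg.le hmin) ha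

end QuasiPositive

def sirField (b δ β γ α μ ν ξ : ℝ) (y : Fin 6 → ℝ) : Fin 6 → ℝ :=
  let S := y 0; let I := y 1; let R := y 2; let Ss := y 3; let Is := y 4; let Rs := y 5
  ![(1 - ξ) * b - β * (1 - α) * S * ((1 - α) * I + Is) - μ * S * (Ss + Is + Rs) + ν * Ss - δ * S,
    β * (1 - α) * S * ((1 - α) * I + Is) - γ * I - μ * I * (Ss + Is + Rs) + ν * Is - δ * I,
    γ * I - μ * R * (Ss + Is + Rs) + ν * Rs - δ * R,
    ξ * b - β * Ss * ((1 - α) * I + Is) + μ * S * (Ss + Is + Rs) - ν * Ss - δ * Ss,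
    β * Ss * ((1 - α) * I + Is) - γ * Is + μ * I * (Ss + Is + Rs) - ν * Is - δ * Is,
    γ * Is + μ * R * (Ss + Is + Rs) - ν * Rs - δ * Rs]

theorem contDiff_sirField (b δ β γ α μ ν ξ : ℝ) {n : WithTop ℕ∞} :
    ContDiff ℝ n (sirField b δ β γ α μ ν ξ) := by
  refine contDiff_pi.2 fun i => ?_
  fin_cases i <;> simp [sirField] <;> fun_prop

theorem quasiPositive_sirField {b δ β γ α μ ν ξ : ℝ} (hb : 0 ≤ b) (hβ : 0 ≤ β) (hγ : 0 ≤ γ)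
    (hα : α ≤ 1) (hμ : 0 ≤ μ) (hν : 0 ≤ ν) (hξ : ξ ∈ Icc (0 : ℝ) 1) :
    QuasiPositive (sirField b δ β γ α μ ν ξ) := by
  intro y hy i hyi
  have hy' : ∀ j, 0 ≤ y j := hy
  have hα' : 0 ≤ 1 - α := sub_nonneg.2 hα
  have hξ' : 0 ≤ 1 - ξ := sub_nonneg.2 hξ.2
  fin_cases i <;> simp at hyi <;> simp [sirField, hyi] <;>
    apply_rules [add_nonneg, mul_nonneg, hξ.1]

theorem IsSIRSol.hasDerivAt_sirField {b δ β γ α μ ν ξ : ℝ} {S I R Ss Is Rs : ℝ → ℝ} {t : ℝ}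
    (h : IsSIRSol b δ β γ α μ ν ξ S I R Ss Is Rs t) :
    HasDerivAt (fun s => ![S s, I s, R s, Ss s, Is s, Rs s])
      (sirField b δ β γ α μ ν ξ ![S t, I t, R t, Ss t, Is t, Rs t]) t := by
  obtain ⟨hS, hI, hR, hSs, hIs, hRs⟩ := h
  refine hasDerivAt_pi.2 fun i => ?_
  fin_cases i <;> simpa [sirField]

theorem solutions_nonnegative_general
    (b δ β γ α μ ν ξ T : ℝ)
    (hb : 0 < b) (hβ : 0 < β) (hγ : 0 < γ)
    (hα : α ∈ Set.Ioc (0 : ℝ) 1) (hμ : 0 < μ) (hν : 0 ≤ ν)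
    (hξ : ξ ∈ Set.Icc (0 : ℝ) 1)
    (S I R Ss Is Rs : ℝ → ℝ)
    (hsol : ∀ t ∈ Set.Icc (0 : ℝ) T, IsSIRSol b δ β γ α μ ν ξ S I R Ss Is Rs t)
    (hS0 : 0 ≤ S 0) (hI0 : 0 ≤ I 0) (hR0 : 0 ≤ R 0)
    (hSs0 : 0 ≤ Ss 0) (hIs0 : 0 ≤ Is 0) (hRs0 : 0 ≤ Rs 0) :
    ∀ t ∈ Set.Icc (0 : ℝ) T,
      0 ≤ S t ∧ 0 ≤ I t ∧ 0 ≤ R t ∧ 0 ≤ Ss t ∧ 0 ≤ Is t ∧ 0 ≤ Rs t := by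
  have hx : ∀ s ∈ Icc 0 T, HasDerivAt (fun s => ![S s, I s, R s, Ss s, Is s, Rs s])
      (sirField b δ β γ α μ ν ξ ![S s, I s, R s, Ss s, Is s, Rs s]) s :=
    fun s hs => (hsol s hs).hasDerivAt_sirField
  have h0 : 0 ≤ ![S 0, I 0, R 0, Ss 0, Is 0, Rs 0] := by
    intro i
    fin_cases i <;> assumption
  intro t ht
  have h := (quasiPositive_sirField hb.le hβ.le hγ.le hα.2 hμ.le hν hξ).nonneg_of_hasDerivWithinAt
    (contDiff_sirField b δ β γ α μ ν ξ).locallyLipschitz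
    (fun s hs => (hx s hs).continuousAt.continuousWithinAt)
    (fun s hs => (hx s (Ico_subset_Icc_self hs)).hasDerivWithinAt) h0 t ht
  exact ⟨h 0, h 1, h 2, h 3, h 4, h 5⟩

/-- solutions of the deterministic SIR model with noncompliance on
`[0, T]` with nonnegative initial data remain nonnegative on `[0, T]`. -/
theorem solutions_nonnegative
    (b δ β γ α μ ν ξ T : ℝ)
    (hb : 0 < b) (hδ : 0 < δ) (hβ : 0 < β) (hγ : 0 < γ)
    (hα : α ∈ Set.Ioc (0 : ℝ) 1) (hμ : 0 < μ) (hν : 0 ≤ ν)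
    (hξ : ξ ∈ Set.Icc (0 : ℝ) 1)
    (S I R Ss Is Rs : ℝ → ℝ)
    (hsol : ∀ t ∈ Set.Icc (0 : ℝ) T, IsSIRSol b δ β γ α μ ν ξ S I R Ss Is Rs t)
    (hS0 : 0 ≤ S 0) (hI0 : 0 ≤ I 0) (hR0 : 0 ≤ R 0)
    (hSs0 : 0 ≤ Ss 0) (hIs0 : 0 ≤ Is 0) (hRs0 : 0 ≤ Rs 0) :
    ∀ t ∈ Set.Icc (0 : ℝ) T,
      0 ≤ S t ∧ 0 ≤ I t ∧ 0 ≤ R t ∧ 0 ≤ Ss t ∧ 0 ≤ Is t ∧ 0 ≤ Rs t :=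
  solutions_nonnegative_general b δ β γ α μ ν ξ T hb hβ hγ hα hμ hν hξ S I R Ss Is Rs hsol hS0 hI0
    hR0 hSs0 hIs0 hRs0
end

section
/- Let s, s* ≥ 0 and let F_{s,s*} = [[β(1−α)²s, β(1−α)s],[β(1−α)s*, βs*]] and V_{s,s*} = [[γ+δ+μs*, −ν],[−μs*, γ+δ+ν]]. Then the eigenvalues of the matrix F_{s,s*}·V_{s,s*}^{−1} are 0 and ℛ₀(s,s*) = (β/(γ+δ))·( s[(1−α)² + α(1−α)μs*/(γ+δ+ν+μs*)] + s*[1 − αν/(γ+δ+ν+μs*)] ); in particular the spectral radius of F_{s,s*}·V_{s,s*}^{−1} equals ℛ₀(s,s*). -/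
/-!
`F_{s,s*}` is the rank-one matrix `β (((1-α)s, s*)ᵀ) ((1-α), 1)`, so `F_{s,s*} V_{s,s*}⁻¹` has
determinant `0`; a `2 × 2` matrix with vanishing determinant has characteristic polynomial
`X (X - trace)`, hence spectrum `{0, trace}`, and the trace of `F_{s,s*} V_{s,s*}⁻¹` is `ℛ₀(s,s*)`.
Writing `1 - α = c ≥ 0` exhibits `ℛ₀(s,s*)` as a quotient of polynomials with nonnegative
coefficients, so it is also the spectral radius.
-/

/-- The reproductive ratio `ℛ₀(s, s*)` of the SIR model with noncompliance at the
disease free state with compliant susceptible population `s` and noncompliant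
susceptible population `s*`. -/
noncomputable def R0 (β γ δ α μ ν s sstar : ℝ) : ℝ :=
  β / (γ + δ) *
    (s * ((1 - α) ^ 2 + α * (1 - α) * μ * sstar / (γ + δ + ν + μ * sstar)) +
     sstar * (1 - α * ν / (γ + δ + ν + μ * sstar)))

theorem Matrix.spectrum_fin_two_of_det_eq_zero {K : Type*} [Field K]
    {M : Matrix (Fin 2) (Fin 2) K} (hM : M.det = 0) : spectrum K M = {0, M.trace} := by
  ext x
  rw [Matrix.mem_spectrum_iff_isRoot_charpoly, Matrix.charpoly_fin_two, hM]
  have : x ^ 2 - M.trace * x = x * (x - M.trace) := by ring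
  simp [this, sub_eq_zero]

theorem isGreatest_abs_image_pair_zero {r : ℝ} (hr : 0 ≤ r) :
    IsGreatest ((fun x => |x|) '' {0, r}) r := by
  rw [Set.image_pair, abs_zero, abs_of_nonneg hr]
  simpa [max_eq_right hr] using isGreatest_pair (a := (0 : ℝ)) (b := r)

theorem R0_nonneg {β γ δ α μ ν s sstar : ℝ} (hβ : 0 ≤ β) (hγδ : 0 < γ + δ) (hα : α ≤ 1)
    (hμ : 0 ≤ μ) (hν : 0 ≤ ν) (hs : 0 ≤ s) (hsstar : 0 ≤ sstar) :
    0 ≤ R0 β γ δ α μ ν s sstar := by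
  have hE : 0 < γ + δ + ν + μ * sstar := by positivity
  obtain ⟨c, hc, rfl⟩ : ∃ c, 0 ≤ c ∧ α = 1 - c := ⟨1 - α, by linarith, by ring⟩
  have hR0 : R0 β γ δ (1 - c) μ ν s sstar = β / (γ + δ) *
      ((s * c * (c * (γ + δ + ν) + μ * sstar) + sstar * (c * ν + (γ + δ) + μ * sstar)) /
        (γ + δ + ν + μ * sstar)) := by
    unfold R0
    field_simp
    ring
  rw [hR0]
  positivity

theorem trace_nextGenerationMatrix {β γ δ α μ ν s sstar : ℝ} (hγδ : γ + δ ≠ 0)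
    (hE : γ + δ + ν + μ * sstar ≠ 0) :
    (!![β * (1 - α) ^ 2 * s, β * (1 - α) * s; β * (1 - α) * sstar, β * sstar] *
        (!![γ + δ + μ * sstar, -ν; -μ * sstar, γ + δ + ν])⁻¹).trace
      = R0 β γ δ α μ ν s sstar := by
  have hdetV : (γ + δ + μ * sstar) * (γ + δ + ν) - -ν * (-μ * sstar)
      = (γ + δ) * (γ + δ + ν + μ * sstar) := by ring
  rw [Matrix.inv_def, Matrix.adjugate_fin_two_of, Matrix.det_fin_two_of, hdetV,
    Ring.inverse_eq_inv, Matrix.mul_smul, Matrix.trace_smul, Matrix.mul_fin_two,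
    Matrix.trace_fin_two_of, smul_eq_mul, R0]
  field_simp
  ring

/-- the next-generation matrix `F_{s,s*} V_{s,s*}⁻¹` has eigenvalues
`0` and `ℛ₀(s,s*)`, and its spectral radius equals `ℛ₀(s,s*)`. -/
theorem next_generation_matrix_spectrum
    (β γ δ α μ ν s sstar : ℝ)
    (hβ : 0 < β) (hγ : 0 < γ) (hδ : 0 < δ) (hα : α ∈ Set.Ioc (0 : ℝ) 1)
    (hμ : 0 < μ) (hν : 0 ≤ ν) (hs : 0 ≤ s) (hsstar : 0 ≤ sstar) :
    spectrum ℝ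
        (!![β * (1 - α) ^ 2 * s, β * (1 - α) * s; β * (1 - α) * sstar, β * sstar] *
          (!![γ + δ + μ * sstar, -ν; -μ * sstar, γ + δ + ν])⁻¹)
      = {0, R0 β γ δ α μ ν s sstar} ∧
    IsGreatest
      ((fun x => |x|) '' spectrum ℝ
        (!![β * (1 - α) ^ 2 * s, β * (1 - α) * s; β * (1 - α) * sstar, β * sstar] *
          (!![γ + δ + μ * sstar, -ν; -μ * sstar, γ + δ + ν])⁻¹))
      (R0 β γ δ α μ ν s sstar) := by
  have hγδ : 0 < γ + δ := by positivity
  have hE : 0 < γ + δ + ν + μ * sstar := by positivity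
  have hdet : (!![β * (1 - α) ^ 2 * s, β * (1 - α) * s; β * (1 - α) * sstar, β * sstar] *
      (!![γ + δ + μ * sstar, -ν; -μ * sstar, γ + δ + ν])⁻¹).det = 0 := by
    rw [Matrix.det_mul, Matrix.det_fin_two_of]
    ring
  have hspec := Matrix.spectrum_fin_two_of_det_eq_zero hdet
  rw [trace_nextGenerationMatrix hγδ.ne' hE.ne'] at hspec
  refine ⟨hspec, hspec ▸ isGreatest_abs_image_pair_zero ?_⟩
  exact R0_nonneg hβ.le hγδ hα.2 hμ.le hν hs hsstar
end

section
/- Assume b, δ, β, γ, μ > 0, ν ≥ 0 and α ∈ (0,1]. The function θ ↦ ℛ₀(b/δ − θ, θ), where ℛ₀(s,s*) = (β/(γ+δ))·( s[(1−α)² + α(1−α)μs*/(γ+δ+ν+μs*)] + s*[1 − αν/(γ+δ+ν+μs*)] ), is strictly increasing on the interval [0, b/δ]. -/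
/-!
Writing `D(θ) = γ + δ + ν + μθ` and `μθ / D(θ) = 1 - (γ + δ + ν) / D(θ)`, the boundary value is
`ℛ₀(S - θ, θ) = β/(γ+δ) · ((1 - α)S + α(θ - h(θ)))` with the Möbius function
`h(θ) = ((1 - α)(γ + δ + ν)(S - θ) + νθ) / D(θ)`.
The difference quotient of `h` is `(ν - (1 - α)(γ + δ + ν + μS))(γ + δ + ν) / (D(x)D(y))`,
which is at most `ν / (γ + δ + ν) < 1`, so `θ - h(θ)` is strictly increasing.
-/

/-- The function `h` of the header, with `c = γ + δ`. -/
noncomputable def R0BoundaryCorrection (α c ν μ S θ : ℝ) : ℝ :=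
  ((1 - α) * (c + ν) * (S - θ) + ν * θ) / (c + ν + μ * θ)

theorem R0_boundary_eq (β γ δ α μ ν S θ : ℝ) (hD : γ + δ + ν + μ * θ ≠ 0) :
    R0 β γ δ α μ ν (S - θ) θ =
      β / (γ + δ) * ((1 - α) * S + α * (θ - R0BoundaryCorrection α (γ + δ) ν μ S θ)) := by
  unfold R0 R0BoundaryCorrection
  congr 1
  rw [mul_comm μ θ] at hD ⊢
  field_simp
  ring

theorem R0BoundaryCorrection_sub_lt {α c ν μ S x y : ℝ} (hα : α ≤ 1) (hc : 0 < c)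
    (hν : 0 ≤ ν) (hμ : 0 ≤ μ) (hx : 0 ≤ x) (hxy : x < y) (hyS : y ≤ S) :
    R0BoundaryCorrection α c ν μ S y - R0BoundaryCorrection α c ν μ S x < y - x := by
  have hk : 0 < c + ν := by linarith
  have hkDx : c + ν ≤ c + ν + μ * x := by nlinarith
  have hkDy : c + ν ≤ c + ν + μ * y := by nlinarith
  have hDx : 0 < c + ν + μ * x := by linarith
  have hDy : 0 < c + ν + μ * y := by linarith
  have hdiff : R0BoundaryCorrection α c ν μ S y - R0BoundaryCorrection α c ν μ S x =
      (ν - (1 - α) * (c + ν + μ * S)) * (c + ν) * (y - x) /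
        ((c + ν + μ * x) * (c + ν + μ * y)) := by
    unfold R0BoundaryCorrection
    rw [mul_comm μ x] at hDx ⊢
    rw [mul_comm μ y] at hDy ⊢
    field_simp
    ring
  have hslope : ν - (1 - α) * (c + ν + μ * S) ≤ ν := by
    have : 0 ≤ (1 - α) * (c + ν + μ * S) :=
      mul_nonneg (by linarith) (by nlinarith)
    linarith
  rw [hdiff, div_lt_iff₀ (by positivity)]
  have hyx : 0 < y - x := by linarith
  calc (ν - (1 - α) * (c + ν + μ * S)) * (c + ν) * (y - x)
      ≤ ν * (c + ν) * (y - x) := by gcongr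
    _ < (c + ν) * (c + ν) * (y - x) := by gcongr; linarith
    _ ≤ (y - x) * ((c + ν + μ * x) * (c + ν + μ * y)) := by
        rw [mul_comm (y - x)]; gcongr

theorem R0_strict_mono_on_boundary_general
    (b δ β γ α μ ν : ℝ)
    (hδ : 0 < δ) (hβ : 0 < β) (hγ : 0 < γ)
    (hα : α ∈ Set.Ioc (0 : ℝ) 1) (hμ : 0 < μ) (hν : 0 ≤ ν) :
    StrictMonoOn (fun θ => R0 β γ δ α μ ν (b / δ - θ) θ) (Set.Icc 0 (b / δ)) := by
  rintro x ⟨hx0, -⟩ y ⟨hy0, hyS⟩ hxy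
  have hc : 0 < γ + δ := by linarith
  have hD : ∀ θ, 0 ≤ θ → γ + δ + ν + μ * θ ≠ 0 := fun θ hθ => by positivity
  have hh := R0BoundaryCorrection_sub_lt hα.2 hc hν hμ.le hx0 hxy hyS
  simp only [R0_boundary_eq _ _ _ _ _ _ _ _ (hD x hx0), R0_boundary_eq _ _ _ _ _ _ _ _ (hD y hy0)]
  refine mul_lt_mul_of_pos_left ?_ (div_pos hβ hc)
  nlinarith [mul_pos hα.1 (sub_pos.2 hh)]

/-- along the boundary line `s + s* = b/δ`, the map
`θ ↦ ℛ₀(b/δ - θ, θ)` is strictly increasing on `[0, b/δ]`. -/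
theorem R0_strict_mono_on_boundary
    (b δ β γ α μ ν : ℝ)
    (hb : 0 < b) (hδ : 0 < δ) (hβ : 0 < β) (hγ : 0 < γ)
    (hα : α ∈ Set.Ioc (0 : ℝ) 1) (hμ : 0 < μ) (hν : 0 ≤ ν) :
    StrictMonoOn (fun θ => R0 β γ δ α μ ν (b / δ - θ) θ) (Set.Icc 0 (b / δ)) :=
  R0_strict_mono_on_boundary_general b δ β γ α μ ν hδ hβ hγ hα hμ hν
end

section
/- Assume b, δ, β, γ, μ > 0, ν ≥ 0 and α ∈ (0,1]. The maximum value of ℛ₀(s,s*) = (β/(γ+δ))·( s[(1−α)² + α(1−α)μs*/(γ+δ+ν+μs*)] + s*[1 − αν/(γ+δ+ν+μs*)] ) over the set {(s,s*) : s ≥ 0, s* ≥ 0, s + s* ≤ b/δ} is attained at (s, s*) = (0, b/δ); that is, ℛ₀(s,s*) ≤ ℛ₀(0, b/δ) for all such (s,s*). -/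
noncomputable def compliantCoeff (γ δ α μ ν x : ℝ) : ℝ :=
  (1 - α) ^ 2 + α * (1 - α) * μ * x / (γ + δ + ν + μ * x)

noncomputable def noncompliantCoeff (γ δ α μ ν x : ℝ) : ℝ :=
  1 - α * ν / (γ + δ + ν + μ * x)

theorem R0_eq (β γ δ α μ ν s x : ℝ) :
    R0 β γ δ α μ ν s x =
      β / (γ + δ) * (s * compliantCoeff γ δ α μ ν x + x * noncompliantCoeff γ δ α μ ν x) :=
  rfl

section Coefficients

variable {γ δ α μ ν x : ℝ}

theorem compliantCoeff_le_noncompliantCoeff (hD : 0 < γ + δ) (hα₀ : 0 ≤ α) (hα₁ : α ≤ 1)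
    (hμ : 0 ≤ μ) (hν : 0 ≤ ν) (hx : 0 ≤ x) :
    compliantCoeff γ δ α μ ν x ≤ noncompliantCoeff γ δ α μ ν x := by
  have hQ : 0 < γ + δ + ν + μ * x := by positivity
  have hgap : noncompliantCoeff γ δ α μ ν x - compliantCoeff γ δ α μ ν x =
      α * ((2 - α) * (γ + δ) + (1 - α) * ν + μ * x) / (γ + δ + ν + μ * x) := by
    unfold compliantCoeff noncompliantCoeff
    field_simp
    ring
  have hnum : 0 ≤ (2 - α) * (γ + δ) + (1 - α) * ν + μ * x := by
    have h₁ : 0 ≤ (2 - α) * (γ + δ) := mul_nonneg (by linarith) hD.le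
    have h₂ : 0 ≤ (1 - α) * ν := mul_nonneg (by linarith) hν
    have h₃ : 0 ≤ μ * x := mul_nonneg hμ hx
    linarith
  have hgap_nonneg :
      0 ≤ α * ((2 - α) * (γ + δ) + (1 - α) * ν + μ * x) / (γ + δ + ν + μ * x) := by
    positivity
  linarith

theorem noncompliantCoeff_nonneg (hD : 0 < γ + δ) (hα₁ : α ≤ 1) (hμ : 0 ≤ μ) (hν : 0 ≤ ν)
    (hx : 0 ≤ x) : 0 ≤ noncompliantCoeff γ δ α μ ν x := by
  have hQ : 0 < γ + δ + ν + μ * x := by positivity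
  have hαν : α * ν ≤ γ + δ + ν + μ * x := by nlinarith
  rw [noncompliantCoeff, sub_nonneg]
  exact (div_le_one hQ).2 hαν

theorem noncompliantCoeff_mono {y : ℝ} (hD : 0 < γ + δ) (hα₀ : 0 ≤ α) (hμ : 0 ≤ μ)
    (hν : 0 ≤ ν) (hx : 0 ≤ x) (hxy : x ≤ y) :
    noncompliantCoeff γ δ α μ ν x ≤ noncompliantCoeff γ δ α μ ν y := by
  unfold noncompliantCoeff
  gcongr

end Coefficients

section R0

variable {β γ δ α μ ν : ℝ}

theorem R0_le_R0_zero_add {s x : ℝ} (hβ : 0 ≤ β) (hD : 0 < γ + δ) (hα₀ : 0 ≤ α) (hα₁ : α ≤ 1)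
    (hμ : 0 ≤ μ) (hν : 0 ≤ ν) (hs : 0 ≤ s) (hx : 0 ≤ x) :
    R0 β γ δ α μ ν s x ≤ R0 β γ δ α μ ν 0 (s + x) := by
  rw [R0_eq, R0_eq, zero_mul, zero_add]
  gcongr
  calc s * compliantCoeff γ δ α μ ν x + x * noncompliantCoeff γ δ α μ ν x
      ≤ s * noncompliantCoeff γ δ α μ ν x + x * noncompliantCoeff γ δ α μ ν x := by
        gcongr
        exact compliantCoeff_le_noncompliantCoeff hD hα₀ hα₁ hμ hν hx
    _ = (s + x) * noncompliantCoeff γ δ α μ ν x := by ring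
    _ ≤ (s + x) * noncompliantCoeff γ δ α μ ν (s + x) := by
        gcongr
        exact noncompliantCoeff_mono hD hα₀ hμ hν hx (le_add_of_nonneg_left hs)

theorem R0_zero_monotoneOn (hβ : 0 ≤ β) (hD : 0 < γ + δ) (hα₀ : 0 ≤ α) (hα₁ : α ≤ 1)
    (hμ : 0 ≤ μ) (hν : 0 ≤ ν) : MonotoneOn (R0 β γ δ α μ ν 0) (Set.Ici 0) := by
  intro x hx y _ hxy
  rw [R0_eq, R0_eq, zero_mul, zero_add, zero_mul, zero_add]
  gcongr
  · exact noncompliantCoeff_nonneg hD hα₁ hμ hν hx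
  · exact noncompliantCoeff_mono hD hα₀ hμ hν hx hxy

end R0

theorem R0_max_at_fully_noncompliant_general
    (b δ β γ α μ ν : ℝ)
    (hδ : 0 < δ) (hβ : 0 < β) (hγ : 0 < γ)
    (hα : α ∈ Set.Ioc (0 : ℝ) 1) (hμ : 0 < μ) (hν : 0 ≤ ν) :
    ∀ s sstar : ℝ, 0 ≤ s → 0 ≤ sstar → s + sstar ≤ b / δ →
      R0 β γ δ α μ ν s sstar ≤ R0 β γ δ α μ ν 0 (b / δ) := by
  intro s sstar hs hsstar hsum
  have hD : 0 < γ + δ := add_pos hγ hδ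
  have hpop : 0 ≤ s + sstar := add_nonneg hs hsstar
  calc R0 β γ δ α μ ν s sstar ≤ R0 β γ δ α μ ν 0 (s + sstar) :=
        R0_le_R0_zero_add hβ.le hD hα.1.le hα.2 hμ.le hν hs hsstar
    _ ≤ R0 β γ δ α μ ν 0 (b / δ) :=
        R0_zero_monotoneOn hβ.le hD hα.1.le hα.2 hμ.le hν hpop (hpop.trans hsum) hsum

/-- over the admissible simplex `{(s, s*) : s, s* ≥ 0, s + s* ≤ b/δ}`,
the reproductive ratio `ℛ₀` is maximized at `(0, b/δ)`. -/
theorem R0_max_at_fully_noncompliant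
    (b δ β γ α μ ν : ℝ)
    (hb : 0 < b) (hδ : 0 < δ) (hβ : 0 < β) (hγ : 0 < γ)
    (hα : α ∈ Set.Ioc (0 : ℝ) 1) (hμ : 0 < μ) (hν : 0 ≤ ν) :
    ∀ s sstar : ℝ, 0 ≤ s → 0 ≤ sstar → s + sstar ≤ b / δ →
      R0 β γ δ α μ ν s sstar ≤ R0 β γ δ α μ ν 0 (b / δ) :=
  R0_max_at_fully_noncompliant_general b δ β γ α μ ν hδ hβ hγ hα hμ hν
end

section
/- Assume b, δ, β, γ, μ > 0, ν ≥ 0, α ∈ (0,1], ξ ∈ [0,1], and b/δ ≥ 1. If ℛ₀(0, b/δ) < 1, then the set U₀ = {(S,I,R,S*,I*,R*) ∈ ℝ⁶₊ : I = I* = R = R* = 0, S + S* ≤ b/δ} is disease-free-stable for the deterministic SIR model with noncompliance: there exist an open set Z containing U₀ in the nonnegative orthant and constants c₁, c₂ > 0 such that every nonnegative solution x(t) = (S,I,R,S*,I*,R*)(t) of the system with x(0) ∈ Z satisfies I(t) ≤ c₁·max{I(0), I*(0)}·e^{−c₂ t} and I*(t) ≤ c₁·max{I(0), I*(0)}·e^{−c₂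 t} for all t ≥ 0. -/
open Filter Topology Real

/-!
Write `n = b/δ`. The total population `N` satisfies `N' = b - δN`, so it never exceeds
`max (N 0) n`; in particular it stays below any `n' > n` once it starts there. While `N ≤ n'`,
the derivative of the weighted infectious load `W = a I + I*` is linear in `(I, I*)` with
coefficients linear in the susceptible populations, so it is bounded by its values at the
vertices of the simplex `S + N* ≤ n'`. The condition `ℛ₀(0, n) < 1` makes these vertex bounds
strictly negative at `n' = n` for a suitable weight `a`, and strictness survives a small
increase of `n'` together with a small decay rate `c > 0`; then `W' ≤ -c W`, and the open
neighbourhood of `U₀` is `{N < n'}`.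
-/

lemma le_mul_exp_of_hasDerivAt_le {f f' : ℝ → ℝ} {c : ℝ}
    (hf : ∀ t, 0 ≤ t → HasDerivAt f (f' t) t) (hle : ∀ t, 0 ≤ t → f' t ≤ -c * f t)
    {t : ℝ} (ht : 0 ≤ t) : f t ≤ f 0 * exp (-c * t) := by
  have h := le_gronwallBound_of_liminf_deriv_right_le (f := f) (f' := f') (K := -c) (ε := 0)
    (a := 0) (b := t) (fun u hu => (hf u hu.1).continuousAt.continuousWithinAt)
    (fun u hu r hr => by
      simpa [slope_def_field, div_eq_inv_mul] using
        (hf u hu.1).hasDerivWithinAt.liminf_right_slope_le hr)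
    le_rfl (fun u hu => by simpa only [add_zero] using hle u hu.1) t ⟨ht, le_rfl⟩
  simpa [gronwallBound_ε0] using h

lemma le_max_of_hasDerivAt_eq_sub_mul {f : ℝ → ℝ} {b δ : ℝ} (hδ : 0 < δ)
    (hf : ∀ t, 0 ≤ t → HasDerivAt f (b - δ * f t) t) {t : ℝ} (ht : 0 ≤ t) :
    f t ≤ max (f 0) (b / δ) := by
  have hdecay : f t - b / δ ≤ (f 0 - b / δ) * exp (-δ * t) :=
    le_mul_exp_of_hasDerivAt_le (fun u hu => ((hf u hu).sub_const (b / δ)))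
      (fun u _ => le_of_eq (by field_simp; ring)) ht
  have hexp : exp (-δ * t) ≤ 1 := exp_le_one_iff.2 (by nlinarith)
  rcases le_total (f 0) (b / δ) with h0 | h0
  · nlinarith [exp_pos (-δ * t), le_max_right (f 0) (b / δ)]
  · nlinarith [le_max_left (f 0) (b / δ)]

lemma mul_add_mul_le_of_le_of_le {K₁ K₂ B x y n : ℝ} (hx : 0 ≤ x) (hy : 0 ≤ y)
    (hxy : x + y ≤ n) (hB : 0 ≤ B) (h₁ : K₁ * n ≤ B) (h₂ : K₂ * n ≤ B) :
    K₁ * x + K₂ * y ≤ B := by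
  rcases le_or_gt 0 (max K₁ K₂) with hK | hK
  · calc K₁ * x + K₂ * y ≤ max K₁ K₂ * x + max K₁ K₂ * y := by
          gcongr
          exacts [le_max_left _ _, le_max_right _ _]
      _ ≤ max K₁ K₂ * n := by rw [← mul_add]; gcongr
      _ ≤ B := by rcases max_choice K₁ K₂ with h | h <;> rw [h] <;> assumption
  · have : K₁ * x + K₂ * y ≤ 0 := by
      nlinarith [le_max_left K₁ K₂, le_max_right K₁ K₂]
    linarith

lemma min_mul_max_le_mul_add {a x y : ℝ} (ha : 0 ≤ a) (hx : 0 ≤ x) (hy : 0 ≤ y) :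
    min a 1 * max x y ≤ a * x + y := by
  rcases le_total x y with h | h
  · rw [max_eq_right h]; nlinarith [min_le_right a 1, min_le_left a 1]
  · rw [max_eq_left h]; nlinarith [min_le_right a 1, min_le_left a 1]

lemma mul_add_le_add_one_mul_max {a x y : ℝ} (ha : 0 ≤ a) :
    a * x + y ≤ (a + 1) * max x y := by
  nlinarith [le_max_left x y, le_max_right x y]

/-- The strict inequalities under which the weighted infectious load `a I + I*` decays at
rate `c` as long as the total population stays below `n`. -/
def IsLyapunovWeight (β γ δ α μ ν n a c : ℝ) : Prop :=
  β * (1 - α) ^ 2 * n < γ + δ - c ∧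
  β * (1 - α) * n + μ * n < a * (γ + δ + μ * n - c) ∧
  a * (β * (1 - α) * n + ν) < γ + δ + ν - c ∧
  β * n + a * ν < γ + δ + ν - c

section
variable {β γ δ α μ ν : ℝ}

lemma lyapunov_deriv_le {n a c S I R Ss Is Rs : ℝ} (hβ : 0 ≤ β) (hα : α ≤ 1) (ha : 0 ≤ a)
    (hw : IsLyapunovWeight β γ δ α μ ν n a c)
    (hS : 0 ≤ S) (hI : 0 ≤ I) (hR : 0 ≤ R) (hSs : 0 ≤ Ss) (hIs : 0 ≤ Is) (hRs : 0 ≤ Rs)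
    (hN : S + I + R + Ss + Is + Rs ≤ n) :
    a * (β * (1 - α) * S * ((1 - α) * I + Is) - γ * I
        - μ * I * (Ss + Is + Rs) + ν * Is - δ * I)
      + (β * Ss * ((1 - α) * I + Is) - γ * Is
        + μ * I * (Ss + Is + Rs) - ν * Is - δ * Is)
      ≤ -c * (a * I + Is) := by
  obtain ⟨h₁, h₂, h₃, h₄⟩ := hw
  set Ns := Ss + Is + Rs
  have hn : 0 ≤ n := by linarith
  have hcoeffI : a * β * (1 - α) ^ 2 * S + (β * (1 - α) + (1 - a) * μ) * Ns
      ≤ a * (γ + δ - c) :=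
    mul_add_mul_le_of_le_of_le (n := n) hS (by positivity) (by linarith)
      (mul_nonneg ha (by nlinarith [mul_nonneg hβ (sq_nonneg (1 - α))]))
      (by nlinarith) (by nlinarith)
  have hcoeffIs : a * β * (1 - α) * S + β * Ss ≤ γ + δ + ν - a * ν - c :=
    mul_add_mul_le_of_le_of_le (n := n) hS hSs (by linarith) (by nlinarith) (by nlinarith)
      (by nlinarith)
  have hSsNs : β * (1 - α) * Ss ≤ β * (1 - α) * Ns :=
    mul_le_mul_of_nonneg_left (by linarith) (mul_nonneg hβ (by linarith))
  linarith [mul_le_mul_of_nonneg_right hcoeffI hI, mul_le_mul_of_nonneg_right hcoeffIs hIs,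
    mul_le_mul_of_nonneg_right hSsNs hI]

lemma R0_zero_lt_one_iff {n : ℝ} (hq : 0 < γ + δ) (hD : 0 < γ + δ + ν + μ * n) :
    R0 β γ δ α μ ν 0 n < 1 ↔
      β * n * (γ + δ + μ * n) + β * (1 - α) * n * ν < (γ + δ) * (γ + δ + μ * n + ν) := by
  rw [R0, zero_mul, zero_add, div_mul_eq_mul_div, div_lt_one hq, one_sub_div hD.ne',
    mul_div_assoc', mul_div_assoc', div_lt_iff₀ hD]
  constructor <;> intro h <;> linarith

lemma exists_isLyapunovWeight {n : ℝ} (hβ : 0 < β) (hα₀ : 0 ≤ α) (hα₁ : α ≤ 1)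
    (hμ : 0 ≤ μ) (hν : 0 ≤ ν) (hq : 0 < γ + δ) (hn : 0 < n)
    (hkey : β * n * (γ + δ + μ * n) + β * (1 - α) * n * ν < (γ + δ) * (γ + δ + μ * n + ν)) :
    ∃ a, 0 < a ∧ IsLyapunovWeight β γ δ α μ ν n a 0 := by
  set q := γ + δ
  set p := β * (1 - α) * n
  have hp : 0 ≤ p := mul_nonneg (mul_nonneg hβ.le (sub_nonneg.2 hα₁)) hn.le
  have hpβ : p ≤ β * n := by nlinarith [mul_nonneg hα₀ (mul_pos hβ hn).le]
  have hqμ : 0 < q + μ * n := by positivity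
  have hpq : p < q := by
    by_contra! h
    nlinarith [mul_le_mul_of_nonneg_right (h.trans hpβ) hqμ.le,
      mul_le_mul_of_nonneg_right h hν]
  -- `a₀` makes the second inequality an equality
  set a₀ := (p + μ * n) / (q + μ * n)
  have ha₀ : a₀ * (q + μ * n) = p + μ * n := div_mul_cancel₀ _ hqμ.ne'
  have h₃ : a₀ * (p + ν) < q + ν := by
    nlinarith [mul_lt_mul_of_pos_right hpq (add_pos_of_nonneg_of_pos hp hqμ)]
  have h₄ : β * n + a₀ * ν < q + ν := by nlinarith
  obtain ⟨a, ha₀a, h₃', h₄'⟩ : ∃ a, a₀ < a ∧ a * (p + ν) < q + ν ∧ β * n + a * ν < q + ν :=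
    Eventually.exists_gt ((ContinuousAt.eventually_lt (by fun_prop) (by fun_prop) h₃).and
      (ContinuousAt.eventually_lt (by fun_prop) (by fun_prop) h₄))
  refine ⟨a, (div_nonneg (by positivity) hqμ.le).trans_lt ha₀a, ?_⟩
  simp only [IsLyapunovWeight, sub_zero]
  refine ⟨by nlinarith [mul_nonneg hα₀ hp], by nlinarith [mul_lt_mul_of_pos_right ha₀a hqμ],
    h₃', h₄'⟩

lemma IsLyapunovWeight.exists_gt {n a : ℝ} (h : IsLyapunovWeight β γ δ α μ ν n a 0) :
    ∃ n' c, n < n' ∧ 0 < c ∧ IsLyapunovWeight β γ δ α μ ν n' a c := by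
  obtain ⟨h₁, h₂, h₃, h₄⟩ := h
  have hev : ∀ᶠ x : ℝ × ℝ in 𝓝 (n, 0), IsLyapunovWeight β γ δ α μ ν x.1 a x.2 :=
    (ContinuousAt.eventually_lt (by fun_prop) (by fun_prop) h₁).and
      ((ContinuousAt.eventually_lt (by fun_prop) (by fun_prop) h₂).and
        ((ContinuousAt.eventually_lt (by fun_prop) (by fun_prop) h₃).and
          (ContinuousAt.eventually_lt (by fun_prop) (by fun_prop) h₄)))
  have hgt : ∀ᶠ x : ℝ × ℝ in 𝓝[>] n ×ˢ 𝓝[>] 0, n < x.1 ∧ 0 < x.2 :=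
    Eventually.prod_mk self_mem_nhdsWithin self_mem_nhdsWithin
  have hle : 𝓝[>] n ×ˢ 𝓝[>] (0 : ℝ) ≤ 𝓝 (n, 0) := by
    rw [nhds_prod_eq]
    exact prod_mono nhdsWithin_le_nhds nhdsWithin_le_nhds
  obtain ⟨x, ⟨hx₁, hx₂⟩, hx⟩ := (hgt.and (hev.filter_mono hle)).exists
  exact ⟨x.1, x.2, hx₁, hx₂, hx⟩

end

lemma IsSIRSol.hasDerivAt_total {b δ β γ α μ ν ξ t : ℝ} {S I R Ss Is Rs : ℝ → ℝ}
    (h : IsSIRSol b δ β γ α μ ν ξ S I R Ss Is Rs t) :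
    HasDerivAt (fun u => S u + I u + R u + Ss u + Is u + Rs u)
      (b - δ * (S t + I t + R t + Ss t + Is t + Rs t)) t := by
  obtain ⟨hS, hI, hR, hSs, hIs, hRs⟩ := h
  exact (((((hS.add hI).add hR).add hSs).add hIs).add hRs).congr_deriv (by ring)

theorem disease_free_set_stable_general
    (b δ β γ α μ ν ξ : ℝ)
    (hb : 0 < b) (hδ : 0 < δ) (hβ : 0 < β) (hγ : 0 < γ)
    (hα : α ∈ Set.Ioc (0 : ℝ) 1) (hμ : 0 < μ) (hν : 0 ≤ ν)
    (hR0 : R0 β γ δ α μ ν 0 (b / δ) < 1) :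
    ∃ (Z : Set (ℝ × ℝ × ℝ × ℝ × ℝ × ℝ)) (c₁ c₂ : ℝ),
      IsOpen Z ∧
      {p : ℝ × ℝ × ℝ × ℝ × ℝ × ℝ |
        0 ≤ p.1 ∧ p.2.1 = 0 ∧ p.2.2.1 = 0 ∧ 0 ≤ p.2.2.2.1 ∧
        p.2.2.2.2.1 = 0 ∧ p.2.2.2.2.2 = 0 ∧ p.1 + p.2.2.2.1 ≤ b / δ} ⊆ Z ∧
      0 < c₁ ∧ 0 < c₂ ∧
      ∀ S I R Ss Is Rs : ℝ → ℝ,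
        (∀ t : ℝ, 0 ≤ t → IsSIRSol b δ β γ α μ ν ξ S I R Ss Is Rs t) →
        (∀ t : ℝ, 0 ≤ t →
          0 ≤ S t ∧ 0 ≤ I t ∧ 0 ≤ R t ∧ 0 ≤ Ss t ∧ 0 ≤ Is t ∧ 0 ≤ Rs t) →
        (S 0, I 0, R 0, Ss 0, Is 0, Rs 0) ∈ Z →
        ∀ t : ℝ, 0 ≤ t →
          I t ≤ c₁ * max (I 0) (Is 0) * Real.exp (-c₂ * t) ∧
          Is t ≤ c₁ * max (I 0) (Is 0) * Real.exp (-c₂ * t) := by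
  obtain ⟨hα₀, hα₁⟩ := hα
  have hq : 0 < γ + δ := by positivity
  have hn : 0 < b / δ := div_pos hb hδ
  obtain ⟨a, ha, hw⟩ := exists_isLyapunovWeight hβ hα₀.le hα₁ hμ.le hν hq hn
    ((R0_zero_lt_one_iff hq (by positivity)).1 hR0)
  obtain ⟨n', c, hnn', hc, hw'⟩ := hw.exists_gt
  refine ⟨{p | p.1 + p.2.1 + p.2.2.1 + p.2.2.2.1 + p.2.2.2.2.1 + p.2.2.2.2.2 < n'},
    (a + 1) / min a 1, c, isOpen_lt (by fun_prop) continuous_const, ?_,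
    by positivity, hc, ?_⟩
  · rintro p ⟨-, hI, hR, -, hIs, hRs, hsum⟩
    simp only [Set.mem_ofPred_eq, hI, hR, hIs, hRs]
    linarith
  intro S I R Ss Is Rs hsol hpos hZ t ht
  have hN : ∀ u, 0 ≤ u → S u + I u + R u + Ss u + Is u + Rs u ≤ n' := fun u hu =>
    (le_max_of_hasDerivAt_eq_sub_mul hδ (fun v hv => (hsol v hv).hasDerivAt_total) hu).trans
      (max_le hZ.le hnn'.le)
  have hW : a * I t + Is t ≤ (a * I 0 + Is 0) * exp (-c * t) :=
    le_mul_exp_of_hasDerivAt_le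
      (fun u hu => ((hsol u hu).2.1.const_mul a).add (hsol u hu).2.2.2.2.1)
      (fun u hu => by
        obtain ⟨hS, hI, hR, hSs, hIs, hRs⟩ := hpos u hu
        exact lyapunov_deriv_le hβ.le hα₁ ha.le hw' hS hI hR hSs hIs hRs (hN u hu)) ht
  obtain ⟨-, hIt, -, -, hIst, -⟩ := hpos t ht
  have hmax : min a 1 * max (I t) (Is t) ≤ (a + 1) * max (I 0) (Is 0) * exp (-c * t) :=
    calc min a 1 * max (I t) (Is t) ≤ a * I t + Is t := min_mul_max_le_mul_add ha.le hIt hIst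
      _ ≤ (a * I 0 + Is 0) * exp (-c * t) := hW
      _ ≤ (a + 1) * max (I 0) (Is 0) * exp (-c * t) := by
        gcongr; exact mul_add_le_add_one_mul_max ha.le
  have hmax' : max (I t) (Is t) ≤ (a + 1) / min a 1 * max (I 0) (Is 0) * exp (-c * t) := by
    rw [mul_assoc, div_mul_eq_mul_div, le_div_iff₀ (lt_min ha one_pos)]
    linarith
  exact ⟨(le_max_left _ _).trans hmax', (le_max_right _ _).trans hmax'⟩

/-- if `ℛ₀(0, b/δ) < 1` then the set `U₀` of admissible disease free
states (ordering `(S, I, R, S*, I*, R*)`) is disease-free-stable: there is an open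
neighborhood `Z` of `U₀` and constants `c₁, c₂ > 0` such that every nonnegative
solution starting in `Z` has `I(t), I*(t) ≤ c₁ max{I(0), I*(0)} e^{-c₂ t}`. -/
theorem disease_free_set_stable
    (b δ β γ α μ ν ξ : ℝ)
    (hb : 0 < b) (hδ : 0 < δ) (hβ : 0 < β) (hγ : 0 < γ)
    (hα : α ∈ Set.Ioc (0 : ℝ) 1) (hμ : 0 < μ) (hν : 0 ≤ ν)
    (hξ : ξ ∈ Set.Icc (0 : ℝ) 1) (hpop : 1 ≤ b / δ)
    (hR0 : R0 β γ δ α μ ν 0 (b / δ) < 1) :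
    ∃ (Z : Set (ℝ × ℝ × ℝ × ℝ × ℝ × ℝ)) (c₁ c₂ : ℝ),
      IsOpen Z ∧
      {p : ℝ × ℝ × ℝ × ℝ × ℝ × ℝ |
        0 ≤ p.1 ∧ p.2.1 = 0 ∧ p.2.2.1 = 0 ∧ 0 ≤ p.2.2.2.1 ∧
        p.2.2.2.2.1 = 0 ∧ p.2.2.2.2.2 = 0 ∧ p.1 + p.2.2.2.1 ≤ b / δ} ⊆ Z ∧
      0 < c₁ ∧ 0 < c₂ ∧
      ∀ S I R Ss Is Rs : ℝ → ℝ,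
        (∀ t : ℝ, 0 ≤ t → IsSIRSol b δ β γ α μ ν ξ S I R Ss Is Rs t) →
        (∀ t : ℝ, 0 ≤ t →
          0 ≤ S t ∧ 0 ≤ I t ∧ 0 ≤ R t ∧ 0 ≤ Ss t ∧ 0 ≤ Is t ∧ 0 ≤ Rs t) →
        (S 0, I 0, R 0, Ss 0, Is 0, Rs 0) ∈ Z →
        ∀ t : ℝ, 0 ≤ t →
          I t ≤ c₁ * max (I 0) (Is 0) * Real.exp (-c₂ * t) ∧
          Is t ≤ c₁ * max (I 0) (Is 0) * Real.exp (-c₂ * t) :=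
  disease_free_set_stable_general b δ β γ α μ ν ξ hb hδ hβ hγ hα hμ hν hR0
end

section
/- Let b, δ, μ > 0 and ν ≥ 0, and take ξ = 0. Then the pairs (s, s*) with s, s* real and s* = b/δ − s satisfying the disease free equilibrium equations (1−ξ)b − μ·s·s* + ν·s* − δ·s = 0 and ξb + μ·s·s* − ν·s* − δ·s* = 0 are exactly (s,s*) = (b/δ, 0) and (s,s*) = ((δ+ν)/μ, b/δ − (δ+ν)/μ). The two pairs are distinct with both coordinates of the second pair positive if and only if b/δ > (δ+ν)/μ. -/
/-!
Adding the two equilibrium equations gives `b - δ (s + s*) = 0`, which holds on the line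
`s* = b/δ - s`; there the two equations are therefore equivalent. For `ξ = 0` the second one
factors as `s* (μ s - (δ + ν)) = 0`, so either `s* = 0` or `s = (δ + ν)/μ`.
-/

lemma compliant_eq_zero_iff_noncompliant_eq_zero {b δ μ ν ξ s sstar : ℝ} (hδ : δ ≠ 0)
    (hs : sstar = b / δ - s) :
    (1 - ξ) * b - μ * s * sstar + ν * sstar - δ * s = 0 ↔
      ξ * b + μ * s * sstar - ν * sstar - δ * sstar = 0 := by
  have hsum : ((1 - ξ) * b - μ * s * sstar + ν * sstar - δ * s) +
      (ξ * b + μ * s * sstar - ν * sstar - δ * sstar) = 0 := by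
    rw [hs]; field_simp; ring
  constructor <;> intro h <;> linarith

lemma noncompliant_eq_zero_iff_of_xi_zero {b δ μ ν s sstar : ℝ} (hμ : μ ≠ 0) :
    0 * b + μ * s * sstar - ν * sstar - δ * sstar = 0 ↔ sstar = 0 ∨ s = (δ + ν) / μ := by
  rw [eq_div_iff hμ, ← sub_eq_zero (a := s * μ)]
  constructor
  · intro h; exact mul_eq_zero.mp (by linear_combination h)
  · intro h; linear_combination (mul_eq_zero.mpr h)

lemma prod_ne_and_pos_and_sub_pos_iff {p q : ℝ} (hp : 0 < p) :
    ((q, (0 : ℝ)) ≠ (p, q - p) ∧ 0 < p ∧ 0 < q - p) ↔ p < q := by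
  refine ⟨fun ⟨_, _, h⟩ => by linarith, fun h => ⟨?_, hp, by linarith⟩⟩
  intro heq
  have := (Prod.mk.inj heq).2
  linarith

theorem dfe_xi_zero_general
    (b δ μ ν ξ : ℝ)
    (hδ : 0 < δ) (hμ : 0 < μ) (hν : 0 ≤ ν) (hξ : ξ = 0) :
    (∀ s sstar : ℝ, sstar = b / δ - s →
      (((1 - ξ) * b - μ * s * sstar + ν * sstar - δ * s = 0 ∧
        ξ * b + μ * s * sstar - ν * sstar - δ * sstar = 0) ↔
        ((s, sstar) = (b / δ, 0) ∨
         (s, sstar) = ((δ + ν) / μ, b / δ - (δ + ν) / μ)))) ∧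
    ((((b / δ, (0 : ℝ)) ≠ ((δ + ν) / μ, b / δ - (δ + ν) / μ)) ∧
        0 < (δ + ν) / μ ∧ 0 < b / δ - (δ + ν) / μ) ↔
      (δ + ν) / μ < b / δ) := by
  subst hξ
  refine ⟨fun s sstar hs => ?_, prod_ne_and_pos_and_sub_pos_iff (by positivity)⟩
  rw [and_iff_right_of_imp (compliant_eq_zero_iff_noncompliant_eq_zero hδ.ne' hs).mpr,
    noncompliant_eq_zero_iff_of_xi_zero hμ.ne']
  subst hs
  simp only [Prod.mk.injEq, sub_eq_zero]
  grind

/-- for `ξ = 0`, the disease free equilibria `(s, s*)` with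
`s* = b/δ - s` are exactly `(b/δ, 0)` and `((δ+ν)/μ, b/δ - (δ+ν)/μ)`; these two
pairs are distinct with both coordinates of the second positive iff
`b/δ > (δ+ν)/μ`. -/
theorem dfe_xi_zero
    (b δ μ ν ξ : ℝ)
    (hb : 0 < b) (hδ : 0 < δ) (hμ : 0 < μ) (hν : 0 ≤ ν) (hξ : ξ = 0) :
    (∀ s sstar : ℝ, sstar = b / δ - s →
      (((1 - ξ) * b - μ * s * sstar + ν * sstar - δ * s = 0 ∧
        ξ * b + μ * s * sstar - ν * sstar - δ * sstar = 0) ↔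
        ((s, sstar) = (b / δ, 0) ∨
         (s, sstar) = ((δ + ν) / μ, b / δ - (δ + ν) / μ)))) ∧
    ((((b / δ, (0 : ℝ)) ≠ ((δ + ν) / μ, b / δ - (δ + ν) / μ)) ∧
        0 < (δ + ν) / μ ∧ 0 < b / δ - (δ + ν) / μ) ↔
      (δ + ν) / μ < b / δ) :=
  dfe_xi_zero_general b δ μ ν ξ hδ hμ hν hξ
end

section
/- Let b, δ, μ > 0, ν ≥ 0 and ξ ∈ (0,1]. Define s₊ = (1/2)( b/δ + (ν+δ)/μ + √((b/δ − (ν+δ)/μ)² + 4ξb/μ) ) and s₋ = (1/2)( b/δ + (ν+δ)/μ − √((b/δ − (ν+δ)/μ)² + 4ξb/μ) ). Then s₊ > b/δ, and 0 ≤ s₋ < b/δ; consequently (s₋, b/δ − s₋) is the unique physically meaningful disease free equilibrium, i.e., the unique solution (s,s*) of (1−ξ)b − μ·s·s* + ν·s* − δ·s = 0 and ξb + μ·s·s* − ν·s* − δ·s* = 0 with s ≥ 0 and s* ≥ 0. -/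
/-!
Adding the two equilibrium equations gives `b = δ (s + s*)`, so every equilibrium lies on the
line `s* = b/δ - s`; substituting into the second equation leaves the quadratic
`(s - b/δ) (s - (ν+δ)/μ) = ξ b/μ`, whose roots are `s₋ ≤ s₊`. Since `ξ b/μ > 0`, the value
`b/δ` lies strictly between the roots, so `s₊` gives `s* < 0`; and since
`ξ b/μ ≤ (b/δ) ((ν+δ)/μ)`, the quadratic is nonnegative at `0`, which forces `s₋ ≥ 0`.
-/

-- The smaller and larger roots of `4 (s - A) (s - B) = e`.
noncomputable def quadRootMinus (A B e : ℝ) : ℝ :=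
  (1 / 2) * (A + B - Real.sqrt ((A - B) ^ 2 + e))

noncomputable def quadRootPlus (A B e : ℝ) : ℝ :=
  (1 / 2) * (A + B + Real.sqrt ((A - B) ^ 2 + e))

section QuadRoots

variable {A B e : ℝ}

lemma abs_sub_lt_sqrt_add (he : 0 < e) : |A - B| < Real.sqrt ((A - B) ^ 2 + e) := by
  rw [← Real.sqrt_sq_eq_abs]
  exact Real.sqrt_lt_sqrt (sq_nonneg _) (lt_add_of_pos_right _ he)

lemma lt_quadRootPlus (he : 0 < e) : A < quadRootPlus A B e := by
  have := (le_abs_self (A - B)).trans_lt (abs_sub_lt_sqrt_add he)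
  unfold quadRootPlus
  linarith

lemma quadRootMinus_lt (he : 0 < e) : quadRootMinus A B e < A := by
  have := (neg_abs_le (A - B)).trans_lt' (neg_lt_neg (abs_sub_lt_sqrt_add he))
  unfold quadRootMinus
  linarith

lemma quadRootMinus_nonneg (hA : 0 ≤ A) (hB : 0 ≤ B) (he : e ≤ 4 * A * B) :
    0 ≤ quadRootMinus A B e := by
  have : Real.sqrt ((A - B) ^ 2 + e) ≤ A + B :=
    Real.sqrt_le_iff.2 ⟨by positivity, by nlinarith⟩
  unfold quadRootMinus
  linarith

lemma four_mul_sub_mul_sub_eq_iff (hdisc : 0 ≤ (A - B) ^ 2 + e) {s : ℝ} :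
    4 * (s - A) * (s - B) = e ↔ s = quadRootMinus A B e ∨ s = quadRootPlus A B e := by
  have hsq := Real.sq_sqrt hdisc
  have hfactor : 4 * (s - A) * (s - B) - e =
      4 * ((s - quadRootMinus A B e) * (s - quadRootPlus A B e)) := by
    unfold quadRootMinus quadRootPlus
    linear_combination hsq
  rw [← sub_eq_zero, hfactor, mul_eq_zero, mul_eq_zero, sub_eq_zero, sub_eq_zero]
  simp

end QuadRoots

lemma dfe_equations_iff {b δ μ ν ξ s t : ℝ} (hδ : δ ≠ 0) (hμ : μ ≠ 0) :
    ((1 - ξ) * b - μ * s * t + ν * t - δ * s = 0 ∧ ξ * b + μ * s * t - ν * t - δ * t = 0) ↔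
      t = b / δ - s ∧ 4 * (s - b / δ) * (s - (ν + δ) / μ) = 4 * ξ * b / μ := by
  constructor
  · rintro ⟨h₁, h₂⟩
    have ht : t = b / δ - s := by
      field_simp
      linear_combination -h₁ - h₂
    refine ⟨ht, ?_⟩
    subst ht
    field_simp at h₂ ⊢
    linear_combination -h₂
  · rintro ⟨rfl, hq⟩
    field_simp at hq
    constructor
    · field_simp
      linear_combination hq
    · field_simp
      linear_combination -hq

lemma nonneg_point_on_line_iff {A r R s t : ℝ} (hr : 0 ≤ r) (hrA : r < A) (hAR : A < R) :
    (0 ≤ s ∧ 0 ≤ t ∧ t = A - s ∧ (s = r ∨ s = R)) ↔ s = r ∧ t = A - r := by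
  constructor
  · rintro ⟨-, ht, rfl, rfl | rfl⟩
    · exact ⟨rfl, rfl⟩
    · linarith
  · rintro ⟨rfl, rfl⟩
    exact ⟨hr, by linarith, rfl, Or.inl rfl⟩

/-- for `ξ ∈ (0,1]`, one has `s₊ > b/δ` and `0 ≤ s₋ < b/δ`, and
`(s₋, b/δ - s₋)` is the unique physically meaningful (componentwise nonnegative)
disease free equilibrium. -/
theorem dfe_xi_positive
    (b δ μ ν ξ : ℝ)
    (hb : 0 < b) (hδ : 0 < δ) (hμ : 0 < μ) (hν : 0 ≤ ν)
    (hξ : ξ ∈ Set.Ioc (0 : ℝ) 1) :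
    b / δ < (1 / 2) * (b / δ + (ν + δ) / μ
        + Real.sqrt ((b / δ - (ν + δ) / μ) ^ 2 + 4 * ξ * b / μ)) ∧
    0 ≤ (1 / 2) * (b / δ + (ν + δ) / μ
        - Real.sqrt ((b / δ - (ν + δ) / μ) ^ 2 + 4 * ξ * b / μ)) ∧
    (1 / 2) * (b / δ + (ν + δ) / μ
        - Real.sqrt ((b / δ - (ν + δ) / μ) ^ 2 + 4 * ξ * b / μ)) < b / δ ∧
    (∀ s sstar : ℝ,
      (0 ≤ s ∧ 0 ≤ sstar ∧
        (1 - ξ) * b - μ * s * sstar + ν * sstar - δ * s = 0 ∧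
        ξ * b + μ * s * sstar - ν * sstar - δ * sstar = 0) ↔
      (s = (1 / 2) * (b / δ + (ν + δ) / μ
            - Real.sqrt ((b / δ - (ν + δ) / μ) ^ 2 + 4 * ξ * b / μ)) ∧
       sstar = b / δ - (1 / 2) * (b / δ + (ν + δ) / μ
            - Real.sqrt ((b / δ - (ν + δ) / μ) ^ 2 + 4 * ξ * b / μ)))) := by
  obtain ⟨hξ0, hξ1⟩ := hξ
  have he : 0 < 4 * ξ * b / μ := by positivity
  have he_le : 4 * ξ * b / μ ≤ 4 * (b / δ) * ((ν + δ) / μ) := by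
    have : ξ * b ≤ b / δ * (ν + δ) := by
      rw [div_mul_eq_mul_div, le_div_iff₀ hδ]
      nlinarith [mul_nonneg hb.le hν, mul_nonneg (mul_nonneg hb.le hδ.le) (sub_nonneg.2 hξ1)]
    rw [mul_assoc, mul_div_assoc', mul_assoc]
    gcongr
  have hplus : b / δ < quadRootPlus (b / δ) ((ν + δ) / μ) (4 * ξ * b / μ) := lt_quadRootPlus he
  have hminus_nonneg : 0 ≤ quadRootMinus (b / δ) ((ν + δ) / μ) (4 * ξ * b / μ) :=
    quadRootMinus_nonneg (by positivity) (by positivity) he_le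
  have hminus_lt : quadRootMinus (b / δ) ((ν + δ) / μ) (4 * ξ * b / μ) < b / δ :=
    quadRootMinus_lt he
  refine ⟨hplus, hminus_nonneg, hminus_lt, fun s sstar => ?_⟩
  rw [dfe_equations_iff hδ.ne' hμ.ne', four_mul_sub_mul_sub_eq_iff (by positivity)]
  exact nonneg_point_on_line_iff hminus_nonneg hminus_lt hplus
end

section
/- Let γ, δ, β, μ > 0, ν ≥ 0, α ∈ (0,1] and s, s* ≥ 0, and let M be the 6×6 real matrix with rows (in the variable ordering (I, I*, S, R, S*, R*)): row 1 = (γ+δ+μs*, −ν, 0, 0, 0, 0); row 2 = (−μs*, γ+δ+ν, 0, 0, 0, 0); row 3 = (β(1−α)²s, (β(1−α)+μ)s, δ+μs*, 0, μs−ν, μs); row 4 = (−γ, 0, 0, δ+μs*, 0, −ν); row 5 = (β(1−α)s*, βs*−μs, −μs*, 0, δ+ν−μs, −μs); row 6 = (0, −γ, 0, −μs*, 0, δ+ν). Then the characteristic polynomial of M is (X−(γ+δ))·(X−(γ+δ+ν+μs*))·(X−δ)²·(X−(δ+ν+μs*))·(X−(δ+ν+μ(s*−s))); equivalently, the eigenvalues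 of M counted with multiplicity are γ+δ, γ+δ+ν+μs*, δ, δ, δ+ν+μs*, and δ+ν+μ(s*−s). -/
/-!
Order the compartments as `(I, I*)`, `(R, R*)`, `(S, S*)`. The infected rows of `DVmatrix` only
involve infected compartments and the recovered rows involve no susceptible one, so in this
order the matrix is block lower triangular with three `2 × 2` diagonal blocks. The
characteristic polynomial is the product of theirs, and each block's eigenvalues are read off
from its trace and determinant.
-/

open Polynomial

/-- The Jacobian `D𝒱(x_{s,s*})` of the transfer map `𝒱 = 𝒱⁻ - 𝒱⁺` of the SIR model
with noncompliance at the disease free point `x_{s,s*} = (0,0,s,0,s*,0)`, in the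
variable ordering `(I, I*, S, R, S*, R*)`. -/
def DVmatrix (γ δ β α μ ν s sstar : ℝ) : Matrix (Fin 6) (Fin 6) ℝ :=
  !![γ + δ + μ * sstar, -ν, 0, 0, 0, 0;
     -(μ * sstar), γ + δ + ν, 0, 0, 0, 0;
     β * (1 - α) ^ 2 * s, (β * (1 - α) + μ) * s, δ + μ * sstar, 0, μ * s - ν, μ * s;
     -γ, 0, 0, δ + μ * sstar, 0, -ν;
     β * (1 - α) * sstar, β * sstar - μ * s, -(μ * sstar), 0, δ + ν - μ * s, -(μ * s);
     0, -γ, 0, -(μ * sstar), 0, δ + ν]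

namespace Matrix

variable {R n m : Type*} [CommRing R] [Fintype n] [Fintype m] [DecidableEq n] [DecidableEq m]

theorem charpoly_eq_mul_of_toBlocks₁₂_eq_zero (M : Matrix (n ⊕ m) (n ⊕ m) R)
    (h : M.toBlocks₁₂ = 0) : M.charpoly = M.toBlocks₁₁.charpoly * M.toBlocks₂₂.charpoly := by
  conv_lhs => rw [← fromBlocks_toBlocks M, h]
  exact charpoly_fromBlocks_zero₁₂ ..

theorem charpoly_fin_two_eq_of_trace_of_det [Nontrivial R] (M : Matrix (Fin 2) (Fin 2) R)
    {a b : R} (htrace : M.trace = a + b) (hdet : M.det = a * b) :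
    M.charpoly = (X - C a) * (X - C b) := by
  rw [charpoly_fin_two, htrace, hdet, map_add, map_mul]
  ring

end Matrix

open Matrix

noncomputable def DVblockOrder : Fin 2 ⊕ (Fin 2 ⊕ Fin 2) ≃ Fin 6 :=
  (Equiv.sumCongr (Equiv.refl _) finSumFinEquiv).trans <|
    finSumFinEquiv.trans (Equiv.ofBijective ![0, 1, 3, 5, 2, 4] (by decide))

section

variable (γ δ β α μ ν s sstar : ℝ)

noncomputable def DVblockMatrix : Matrix (Fin 2 ⊕ (Fin 2 ⊕ Fin 2)) (Fin 2 ⊕ (Fin 2 ⊕ Fin 2)) ℝ :=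
  reindex DVblockOrder.symm DVblockOrder.symm (DVmatrix γ δ β α μ ν s sstar)

theorem DVblockMatrix_charpoly :
    (DVblockMatrix γ δ β α μ ν s sstar).charpoly = (DVmatrix γ δ β α μ ν s sstar).charpoly :=
  charpoly_reindex _ _

theorem DVblockMatrix_toBlocks₁₂ : (DVblockMatrix γ δ β α μ ν s sstar).toBlocks₁₂ = 0 := by
  ext i j; fin_cases i <;> rcases j with j | j <;> fin_cases j <;> rfl

theorem DVblockMatrix_toBlocks₁₁ : (DVblockMatrix γ δ β α μ ν s sstar).toBlocks₁₁ =
    !![γ + δ + μ * sstar, -ν; -(μ * sstar), γ + δ + ν] := by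
  ext i j; fin_cases i <;> fin_cases j <;> rfl

theorem DVblockMatrix_toBlocks₂₂_toBlocks₁₂ :
    (DVblockMatrix γ δ β α μ ν s sstar).toBlocks₂₂.toBlocks₁₂ = 0 := by
  ext i j; fin_cases i <;> fin_cases j <;> rfl

theorem DVblockMatrix_toBlocks₂₂_toBlocks₁₁ :
    (DVblockMatrix γ δ β α μ ν s sstar).toBlocks₂₂.toBlocks₁₁ =
      !![δ + μ * sstar, -ν; -(μ * sstar), δ + ν] := by
  ext i j; fin_cases i <;> fin_cases j <;> rfl

theorem DVblockMatrix_toBlocks₂₂_toBlocks₂₂ :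
    (DVblockMatrix γ δ β α μ ν s sstar).toBlocks₂₂.toBlocks₂₂ =
      !![δ + μ * sstar, μ * s - ν; -(μ * sstar), δ + ν - μ * s] := by
  ext i j; fin_cases i <;> fin_cases j <;> rfl

end

theorem DVmatrix_charpoly_general
    (γ δ β α μ ν s sstar : ℝ) :
    (DVmatrix γ δ β α μ ν s sstar).charpoly =
      (X - C (γ + δ)) * (X - C (γ + δ + ν + μ * sstar)) * (X - C δ) ^ 2 *
        (X - C (δ + ν + μ * sstar)) * (X - C (δ + ν + μ * (sstar - s))) := by
  rw [← DVblockMatrix_charpoly,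
    charpoly_eq_mul_of_toBlocks₁₂_eq_zero _ (DVblockMatrix_toBlocks₁₂ ..),
    charpoly_eq_mul_of_toBlocks₁₂_eq_zero _ (DVblockMatrix_toBlocks₂₂_toBlocks₁₂ ..),
    DVblockMatrix_toBlocks₁₁, DVblockMatrix_toBlocks₂₂_toBlocks₁₁,
    DVblockMatrix_toBlocks₂₂_toBlocks₂₂,
    charpoly_fin_two_eq_of_trace_of_det _ (a := γ + δ) (b := γ + δ + ν + μ * sstar)
      (by rw [trace_fin_two_of]; ring) (by rw [det_fin_two_of]; ring),
    charpoly_fin_two_eq_of_trace_of_det _ (a := δ) (b := δ + ν + μ * sstar)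
      (by rw [trace_fin_two_of]; ring) (by rw [det_fin_two_of]; ring),
    charpoly_fin_two_eq_of_trace_of_det _ (a := δ) (b := δ + ν + μ * (sstar - s))
      (by rw [trace_fin_two_of]; ring) (by rw [det_fin_two_of]; ring)]
  ring

/-- the characteristic polynomial of `D𝒱(x_{s,s*})` factors as
`(X - (γ+δ))(X - (γ+δ+ν+μs*))(X - δ)²(X - (δ+ν+μs*))(X - (δ+ν+μ(s*-s)))`;
i.e. its eigenvalues with multiplicity are `γ+δ, γ+δ+ν+μs*, δ, δ, δ+ν+μs*,
δ+ν+μ(s*-s)`. -/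
theorem DVmatrix_charpoly
    (γ δ β α μ ν s sstar : ℝ)
    (hγ : 0 < γ) (hδ : 0 < δ) (hβ : 0 < β) (hα : α ∈ Set.Ioc (0 : ℝ) 1)
    (hμ : 0 < μ) (hν : 0 ≤ ν) (hs : 0 ≤ s) (hsstar : 0 ≤ sstar) :
    (DVmatrix γ δ β α μ ν s sstar).charpoly =
      (X - C (γ + δ)) * (X - C (γ + δ + ν + μ * sstar)) * (X - C δ) ^ 2 *
        (X - C (δ + ν + μ * sstar)) * (X - C (δ + ν + μ * (sstar - s))) :=
  DVmatrix_charpoly_general γ δ β α μ ν s sstar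
end

section
/- Let b, δ, β, γ > 0, α ∈ (0,1], σ_β ≥ 0, and define ℛ₀^σ = (β·(b/δ) + (σ_β²/2)·(b/δ)²)/(γ+δ). Then for all S, I, S*, I* ≥ 0 with S + S* ≤ b/δ and I + I* ≤ b/δ, the following inequality holds: 2(I+I*)·[ β((1−α)S + S*)((1−α)I + I*) − (γ+δ)(I+I*) ] + σ_β²·((1−α)²SI + S*I*)² ≤ 2(γ+δ)(ℛ₀^σ − 1)·(I+I*)². In particular, if ℛ₀^σ < 1 then the left-hand side is at most −2(γ+δ)(1−ℛ₀^σ)(I+I*)² ≤ 0. -/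
/-!
Write `K = b/δ` for the population bound and `N = I + I*`. Compliance only lowers the
effective susceptible and infectious masses, so both the incidence
`((1-α)S + S*)((1-α)I + I*)` and the noise term `(1-α)²SI + S*I*` are at most `K N`.
Substituting these bounds turns the drift into `(2βK + σ_β²K² - 2(γ+δ)) N²`, and the
coefficient is exactly `2(γ+δ)(ℛ₀^σ - 1)`.
-/

theorem mul_add_mul_le_add_mul_add {R : Type*} [Semiring R] [PartialOrder R] [IsOrderedRing R]
    {a b c d : R} (ha : 0 ≤ a) (hb : 0 ≤ b) (hc : 0 ≤ c) (hd : 0 ≤ d) :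
    a * b + c * d ≤ (a + c) * (b + d) := by
  have h : (a + c) * (b + d) = a * b + c * d + (a * d + c * b) := by
    simp only [add_mul, mul_add]; abel
  rw [h]
  exact le_add_of_nonneg_right (add_nonneg (mul_nonneg ha hd) (mul_nonneg hc hb))

section Compliance

variable {c S I Ss Is K : ℝ}

theorem weighted_incidence_le (hc0 : 0 ≤ c) (hc1 : c ≤ 1) (hS : 0 ≤ S) (hI : 0 ≤ I)
    (hSs : 0 ≤ Ss) (hIs : 0 ≤ Is) (hSsum : S + Ss ≤ K) :
    (c * S + Ss) * (c * I + Is) ≤ K * (I + Is) := by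
  have hX : c * S + Ss ≤ K := by linarith [mul_le_of_le_one_left hS hc1]
  have hY : c * I + Is ≤ I + Is := by linarith [mul_le_of_le_one_left hI hc1]
  exact mul_le_mul hX hY (by positivity) (hSsum.trans' (by linarith))

theorem weighted_noise_le (hc0 : 0 ≤ c) (hc1 : c ≤ 1) (hS : 0 ≤ S) (hI : 0 ≤ I)
    (hSs : 0 ≤ Ss) (hIs : 0 ≤ Is) (hSsum : S + Ss ≤ K) :
    c ^ 2 * S * I + Ss * Is ≤ K * (I + Is) := by
  calc c ^ 2 * S * I + Ss * Is = (c * S) * (c * I) + Ss * Is := by ring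
    _ ≤ (c * S + Ss) * (c * I + Is) :=
      mul_add_mul_le_add_mul_add (by positivity) (by positivity) hSs hIs
    _ ≤ K * (I + Is) := weighted_incidence_le hc0 hc1 hS hI hSs hIs hSsum

end Compliance

theorem drift_le_of_incidence_le {β σ κ K N X Y C : ℝ} (hβ : 0 ≤ β) (hN : 0 ≤ N)
    (hXY : X * Y ≤ K * N) (hC0 : 0 ≤ C) (hC : C ≤ K * N) :
    2 * N * (β * X * Y - κ * N) + σ ^ 2 * C ^ 2 ≤ (2 * β * K + σ ^ 2 * K ^ 2 - 2 * κ) * N ^ 2 := by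
  have hinc : 2 * N * (β * X * Y) ≤ 2 * N * (β * (K * N)) := by
    rw [mul_assoc β]; gcongr
  have hnoise : σ ^ 2 * C ^ 2 ≤ σ ^ 2 * (K * N) ^ 2 := by gcongr
  linarith [show (2 * β * K + σ ^ 2 * K ^ 2 - 2 * κ) * N ^ 2
    = 2 * N * (β * (K * N)) - 2 * N * (κ * N) + σ ^ 2 * (K * N) ^ 2 by ring]

theorem drift_inequality_worst_case_general
    (b δ β γ α σβ : ℝ)
    (hδ : 0 < δ) (hβ : 0 < β) (hγ : 0 < γ)
    (hα : α ∈ Set.Ioc (0 : ℝ) 1)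
    (R0σ : ℝ)
    (hR0σ : R0σ = (β * (b / δ) + σβ ^ 2 / 2 * (b / δ) ^ 2) / (γ + δ)) :
    ∀ S I Ss Is : ℝ, 0 ≤ S → 0 ≤ I → 0 ≤ Ss → 0 ≤ Is →
      S + Ss ≤ b / δ → I + Is ≤ b / δ →
      (2 * (I + Is) * (β * ((1 - α) * S + Ss) * ((1 - α) * I + Is)
            - (γ + δ) * (I + Is))
          + σβ ^ 2 * ((1 - α) ^ 2 * S * I + Ss * Is) ^ 2
        ≤ 2 * (γ + δ) * (R0σ - 1) * (I + Is) ^ 2) ∧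
      (R0σ < 1 →
        2 * (I + Is) * (β * ((1 - α) * S + Ss) * ((1 - α) * I + Is)
              - (γ + δ) * (I + Is))
            + σβ ^ 2 * ((1 - α) ^ 2 * S * I + Ss * Is) ^ 2
          ≤ -(2 * (γ + δ) * (1 - R0σ) * (I + Is) ^ 2) ∧
        -(2 * (γ + δ) * (1 - R0σ) * (I + Is) ^ 2) ≤ 0) := by
  intro S I Ss Is hS hI hSs hIs hSsum _
  have hc0 : 0 ≤ 1 - α := sub_nonneg.2 hα.2
  have hc1 : 1 - α ≤ 1 := by linarith [hα.1]
  have hγδ : 0 < γ + δ := by positivity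
  have hcoeff : 2 * (γ + δ) * (R0σ - 1)
      = 2 * β * (b / δ) + σβ ^ 2 * (b / δ) ^ 2 - 2 * (γ + δ) := by
    rw [hR0σ]; field_simp
  have hdrift := drift_le_of_incidence_le (σ := σβ) (κ := γ + δ) hβ.le (by positivity)
    (weighted_incidence_le hc0 hc1 hS hI hSs hIs hSsum) (by positivity)
    (weighted_noise_le hc0 hc1 hS hI hSs hIs hSsum)
  rw [← hcoeff] at hdrift
  refine ⟨hdrift, fun hR => ⟨by linarith, neg_nonpos.2 ?_⟩⟩
  have := sub_pos.2 hR
  positivity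

/-- the drift inequality for the Itô process `V = (I + I*)²` in the
worst-case stochastic SIR model with noncompliance (`ξ = 1`, `ν = 0`), with
stochastic threshold `ℛ₀^σ = (β(b/δ) + (σ_β²/2)(b/δ)²)/(γ+δ)`. -/
theorem drift_inequality_worst_case
    (b δ β γ α σβ : ℝ)
    (hb : 0 < b) (hδ : 0 < δ) (hβ : 0 < β) (hγ : 0 < γ)
    (hα : α ∈ Set.Ioc (0 : ℝ) 1) (hσβ : 0 ≤ σβ)
    (R0σ : ℝ)
    (hR0σ : R0σ = (β * (b / δ) + σβ ^ 2 / 2 * (b / δ) ^ 2) / (γ + δ)) :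
    ∀ S I Ss Is : ℝ, 0 ≤ S → 0 ≤ I → 0 ≤ Ss → 0 ≤ Is →
      S + Ss ≤ b / δ → I + Is ≤ b / δ →
      (2 * (I + Is) * (β * ((1 - α) * S + Ss) * ((1 - α) * I + Is)
            - (γ + δ) * (I + Is))
          + σβ ^ 2 * ((1 - α) ^ 2 * S * I + Ss * Is) ^ 2
        ≤ 2 * (γ + δ) * (R0σ - 1) * (I + Is) ^ 2) ∧
      (R0σ < 1 →
        2 * (I + Is) * (β * ((1 - α) * S + Ss) * ((1 - α) * I + Is)
              - (γ + δ) * (I + Is))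
            + σβ ^ 2 * ((1 - α) ^ 2 * S * I + Ss * Is) ^ 2
          ≤ -(2 * (γ + δ) * (1 - R0σ) * (I + Is) ^ 2) ∧
        -(2 * (γ + δ) * (1 - R0σ) * (I + Is) ^ 2) ≤ 0) :=
  drift_inequality_worst_case_general b δ β γ α σβ hδ hβ hγ hα R0σ hR0σ
end
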